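/- arXiv:2603.00408 — 5 statements merged into one kernel-verified Lean document; each statement's English description precedes it below -/
import Mathlib

section
/- (Dataset-level certified accuracy lower bound.) Let f, g : ℝ^d → ℝ^K be continuous (K ≥ 2), let ε > 0, p ∈ [1,∞], and let S be a finite set of labeled samples (x, y) with y a class index. Suppose for each (x, y) ∈ S a real τ(x) ≥ 0 satisfies ‖f(x+δ) − g(x+δ)‖_∞ ≤ τ(x) for all δ with ‖δ‖_p ≤ ε, and a real L_g(x;ε) satisfies L_g(x;ε) ≤ Φ_g(x;ε), where Φ is the robust margin computed with the label y of the sample. Then the number of samples in S with L_g(x;ε) > 2τ(x) is at most the number of samples in S with Φ_f(x;ε) > 0. -/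
open scoped ENNReal NNReal

/-- The logit margin `m(a) = a_y - max_{k ≠ y} a_k` for `a : Fin K → ℝ`, `K ≥ 2`. -/
noncomputable def margin {K : ℕ} (hK : 2 ≤ K) (y : Fin K) (a : Fin K → ℝ) : ℝ :=
  a y - (Finset.univ.erase y).sup'
    (by
      rw [← Finset.card_pos, Finset.card_erase_of_mem (Finset.mem_univ y), Finset.card_univ,
        Fintype.card_fin]
      omega) a

lemma margin_ge {K : ℕ} (hK : 2 ≤ K) (y : Fin K) (a b : Fin K → ℝ) :
    margin hK y b - 2 * ‖a - b‖ ≤ margin hK y a := by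
  unfold margin
  have hne : (Finset.univ.erase y).Nonempty := by
    rw [← Finset.card_pos, Finset.card_erase_of_mem (Finset.mem_univ y), Finset.card_univ,
      Fintype.card_fin]; omega
  have h1 : ∀ k, |a k - b k| ≤ ‖a - b‖ := fun k => by
    have := norm_le_pi_norm (a - b) k
    simpa using this
  have hy : b y - ‖a - b‖ ≤ a y := by have := (abs_le.mp (h1 y)).1; linarith
  have hsup : (Finset.univ.erase y).sup' hne a ≤ (Finset.univ.erase y).sup' hne b + ‖a - b‖ := by
    apply Finset.sup'_le
    intro k hk
    have := (abs_le.mp (h1 k)).2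
    have hb := Finset.le_sup' b hk
    linarith
  linarith

lemma margin_ge_neg {K : ℕ} (hK : 2 ≤ K) (y : Fin K) (a : Fin K → ℝ) :
    -(2 * ‖a‖) ≤ margin hK y a := by
  unfold margin
  have hne : (Finset.univ.erase y).Nonempty := by
    rw [← Finset.card_pos, Finset.card_erase_of_mem (Finset.mem_univ y), Finset.card_univ,
      Fintype.card_fin]; omega
  have h1 : ∀ k, |a k| ≤ ‖a‖ := fun k => by simpa using norm_le_pi_norm a k
  have hy : -‖a‖ ≤ a y := (abs_le.mp (h1 y)).1
  have hsup : (Finset.univ.erase y).sup' hne a ≤ ‖a‖ := by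
    apply Finset.sup'_le
    intro k _; exact (abs_le.mp (h1 k)).2
  linarith

/-- The robust margin `Φ_h(x; ε) = min_{‖δ‖_p ≤ ε} m(h(x+δ))` over the ℓ_p ball
(with respect to the sample's label `y`). -/
noncomputable def robustMargin {d K : ℕ} (hK : 2 ≤ K) (y : Fin K) (p : ℝ≥0∞) [Fact (1 ≤ p)]
    (h : PiLp p (fun _ : Fin d => ℝ) → (Fin K → ℝ))
    (x : PiLp p (fun _ : Fin d => ℝ)) (ε : ℝ) : ℝ :=
  sInf ((fun δ => margin hK y (h (x + δ))) '' Metric.closedBall 0 ε)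

/-- Dataset-level certified accuracy lower bound: the number of samples certified on the
pruned model `g` with buffer `2τ(x)` is at most the number of samples that are certifiably
robust for the original model `f`. -/
theorem dataset_certified_accuracy_lower_bound {d K : ℕ} (hK : 2 ≤ K)
    (p : ℝ≥0∞) [Fact (1 ≤ p)]
    (f g : PiLp p (fun _ : Fin d => ℝ) → (Fin K → ℝ))
    (hf : Continuous f) (hg : Continuous g)
    (ε : ℝ) (hε : 0 < ε)
    (S : Finset ((PiLp p (fun _ : Fin d => ℝ)) × Fin K))
    (τ : PiLp p (fun _ : Fin d => ℝ) → ℝ)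
    (Lg : PiLp p (fun _ : Fin d => ℝ) → ℝ)
    (hτ : ∀ s ∈ S, 0 ≤ τ s.1 ∧
      ∀ δ : PiLp p (fun _ : Fin d => ℝ), ‖δ‖ ≤ ε →
        ‖f (s.1 + δ) - g (s.1 + δ)‖ ≤ τ s.1)
    (hLg : ∀ s ∈ S, Lg s.1 ≤ robustMargin hK s.2 p g s.1 ε) :
    (S.filter fun s => 2 * τ s.1 < Lg s.1).card ≤
      (S.filter fun s => 0 < robustMargin hK s.2 p f s.1 ε).card := by
  apply Finset.card_le_card
  intro s hs
  rw [Finset.mem_filter] at hs ⊢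
  obtain ⟨hsS, hlt⟩ := hs
  refine ⟨hsS, ?_⟩
  obtain ⟨hτ0, hτb⟩ := hτ s hsS
  have hLgb := hLg s hsS
  set x := s.1
  set y := s.2
  have hball : (0 : PiLp p (fun _ : Fin d => ℝ)) ∈ Metric.closedBall (0 : PiLp p (fun _ : Fin d => ℝ)) ε := by
    simp [hε.le]
  have hne : ((fun δ => margin hK y (g (x + δ))) '' Metric.closedBall 0 ε).Nonempty :=
    ⟨_, Set.mem_image_of_mem _ hball⟩
  have hnef : ((fun δ => margin hK y (f (x + δ))) '' Metric.closedBall 0 ε).Nonempty :=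
    ⟨_, Set.mem_image_of_mem _ hball⟩
  -- bounded below for g
  have hcomp : IsCompact (Metric.closedBall (0 : PiLp p (fun _ : Fin d => ℝ)) ε) :=
    isCompact_closedBall _ _
  have hgim : IsCompact ((fun δ => g (x + δ)) '' Metric.closedBall 0 ε) :=
    hcomp.image (hg.comp (continuous_const.add continuous_id))
  obtain ⟨C, hC⟩ := hgim.isBounded.subset_closedBall 0
  have hbdd : BddBelow ((fun δ => margin hK y (g (x + δ))) '' Metric.closedBall 0 ε) := by
    refine ⟨-(2 * C), ?_⟩
    rintro _ ⟨δ, hδ, rfl⟩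
    have h1 : ‖g (x + δ)‖ ≤ C := by
      have := hC (Set.mem_image_of_mem _ hδ)
      simpa [Metric.mem_closedBall] using this
    have := margin_ge_neg hK y (g (x + δ))
    nlinarith [norm_nonneg (g (x + δ))]
  have key : Lg x - 2 * τ x ≤ robustMargin hK y p f x ε := by
    apply le_csInf hnef
    rintro _ ⟨δ, hδ, rfl⟩
    have hδε : ‖δ‖ ≤ ε := by simpa [Metric.mem_closedBall] using hδ
    have h1 : margin hK y (g (x + δ)) - 2 * ‖f (x + δ) - g (x + δ)‖ ≤ margin hK y (f (x + δ)) :=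
      margin_ge hK y _ _
    have h2 : ‖f (x + δ) - g (x + δ)‖ ≤ τ x := hτb δ hδε
    have h3 : robustMargin hK y p g x ε ≤ margin hK y (g (x + δ)) :=
      csInf_le hbdd (Set.mem_image_of_mem _ hδ)
    have h4 : Lg x ≤ robustMargin hK y p g x ε := hLgb
    linarith
  linarith
end

section
/- (Dataset-level certified accuracy upper bound.) Let f, g : ℝ^d → ℝ^K be continuous (K ≥ 2), let ε > 0, p ∈ [1,∞], and let S be a finite set of labeled samples (x, y). Suppose for each (x, y) ∈ S a real τ(x) ≥ 0 satisfies ‖f(x+δ) − g(x+δ)‖_∞ ≤ τ(x) for all δ with ‖δ‖_p ≤ ε, and a real U_g(x;ε) satisfies U_g(x;ε) ≥ Φ_g(x;ε), where Φ is the robust margin computed with the label y of the sample. Then the number of samples in S with Φ_f(x;ε) > 0 is at most |S| minus the number of samples in S with U_g(x;ε) ≤ −2τ(x). -/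
open scoped ENNReal NNReal

lemma margin_lipschitz {K : ℕ} (hK : 2 ≤ K) (y : Fin K) (a b : Fin K → ℝ) (t : ℝ)
    (h : ∀ k, |a k - b k| ≤ t) : margin hK y a ≤ margin hK y b + 2 * t := by
  unfold margin
  have hne : (Finset.univ.erase y).Nonempty := by
    rw [← Finset.card_pos, Finset.card_erase_of_mem (Finset.mem_univ y), Finset.card_univ,
      Fintype.card_fin]
    omega
  have h1 : a y ≤ b y + t := by have := abs_le.mp (h y); linarith [this.1]
  have h2 : (Finset.univ.erase y).sup' hne b ≤ (Finset.univ.erase y).sup' hne a + t := by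
    apply Finset.sup'_le
    intro k hk
    have hk1 : b k ≤ a k + t := by have := abs_le.mp (h k); linarith [this.1]
    have hk2 : a k ≤ (Finset.univ.erase y).sup' hne a := Finset.le_sup' a hk
    linarith
  linarith

/-- Dataset-level certified accuracy upper bound: the number of samples certifiably robust
for `f` is at most `|S|` minus the number of samples provably non-robust on the pruned
model `g` (those with `U_g(x;ε) ≤ -2τ(x)`). -/
theorem dataset_certified_accuracy_upper_bound {d K : ℕ} (hK : 2 ≤ K)
    (p : ℝ≥0∞) [Fact (1 ≤ p)]
    (f g : PiLp p (fun _ : Fin d => ℝ) → (Fin K → ℝ))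
    (hf : Continuous f) (hg : Continuous g)
    (ε : ℝ) (hε : 0 < ε)
    (S : Finset ((PiLp p (fun _ : Fin d => ℝ)) × Fin K))
    (τ : PiLp p (fun _ : Fin d => ℝ) → ℝ)
    (Ug : PiLp p (fun _ : Fin d => ℝ) → ℝ)
    (hτ : ∀ s ∈ S, 0 ≤ τ s.1 ∧
      ∀ δ : PiLp p (fun _ : Fin d => ℝ), ‖δ‖ ≤ ε →
        ‖f (s.1 + δ) - g (s.1 + δ)‖ ≤ τ s.1)
    (hUg : ∀ s ∈ S, robustMargin hK s.2 p g s.1 ε ≤ Ug s.1) :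
    (S.filter fun s => 0 < robustMargin hK s.2 p f s.1 ε).card ≤
      S.card - (S.filter fun s => Ug s.1 ≤ -(2 * τ s.1)).card := by
  classical
  -- key disjointness: a sample cannot satisfy both predicates
  have key : ∀ s ∈ S, Ug s.1 ≤ -(2 * τ s.1) → ¬ (0 < robustMargin hK s.2 p f s.1 ε) := by
    intro s hs hU hpos
    set F : Set ℝ := (fun δ => margin hK s.2 (f (s.1 + δ))) '' Metric.closedBall 0 ε with hF
    set G : Set ℝ := (fun δ => margin hK s.2 (g (s.1 + δ))) '' Metric.closedBall 0 ε with hG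
    have hGne : G.Nonempty :=
      ⟨_, ⟨0, Metric.mem_closedBall_self (le_of_lt hε), rfl⟩⟩
    have hFbdd : BddBelow F := by
      by_contra hnb
      rw [show robustMargin hK s.2 p f s.1 ε = sInf F from rfl,
        Real.sInf_of_not_bddBelow hnb] at hpos
      exact lt_irrefl 0 hpos
    -- sInf G < -(2*τ) + sInf F
    have hlt : sInf G < -(2 * τ s.1) + robustMargin hK s.2 p f s.1 ε := by
      have := hUg s hs
      have : sInf G ≤ Ug s.1 := this
      linarith
    obtain ⟨m, ⟨δ, hδ, rfl⟩, hm⟩ := exists_lt_of_csInf_lt hGne hlt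
    have hδ' : ‖δ‖ ≤ ε := by
      simpa [Metric.mem_closedBall, dist_zero_right] using hδ
    have hτδ := (hτ s hs).2 δ hδ'
    have hlip : margin hK s.2 (f (s.1 + δ)) ≤ margin hK s.2 (g (s.1 + δ)) + 2 * τ s.1 := by
      apply margin_lipschitz
      intro k
      calc |f (s.1 + δ) k - g (s.1 + δ) k| = ‖(f (s.1 + δ) - g (s.1 + δ)) k‖ := by
            simp [Real.norm_eq_abs]
        _ ≤ ‖f (s.1 + δ) - g (s.1 + δ)‖ := norm_le_pi_norm _ k
        _ ≤ τ s.1 := hτδ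
    have hmem : margin hK s.2 (f (s.1 + δ)) ∈ F := ⟨δ, hδ, rfl⟩
    have : robustMargin hK s.2 p f s.1 ε ≤ margin hK s.2 (f (s.1 + δ)) :=
      csInf_le hFbdd hmem
    linarith
  -- counting
  have hdisj : Disjoint (S.filter fun s => 0 < robustMargin hK s.2 p f s.1 ε)
      (S.filter fun s => Ug s.1 ≤ -(2 * τ s.1)) := by
    rw [Finset.disjoint_left]
    intro s h1 h2
    rw [Finset.mem_filter] at h1 h2
    exact key s h1.1 h2.2 h1.2
  have hsub : (S.filter fun s => 0 < robustMargin hK s.2 p f s.1 ε) ∪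
      (S.filter fun s => Ug s.1 ≤ -(2 * τ s.1)) ⊆ S := by
    intro s hs
    rcases Finset.mem_union.mp hs with h | h <;> exact (Finset.mem_filter.mp h).1
  have := Finset.card_le_card hsub
  rw [Finset.card_union_of_disjoint hdisj] at this
  omega
end

section
/- (Closed-form uniform pruning residual bound on the perturbation ball.) Let σ : ℝ → ℝ be 1-Lipschitz, and for l = 1,…,L let W_l, W_l' be matrices of compatible sizes and b_l vectors; define h_l, h_l' as the iterates of the original and pruned networks, ΔW_l := W_l − W_l'. Fix x ∈ ℝ^d, ε > 0, p ∈ [1,∞], and suppose constants H_{l−1} ≥ 0 satisfy ‖h_{l−1}(x+δ)‖_∞ ≤ H_{l−1} for all δ with ‖δ‖_p ≤ ε and all l = 1,…,L. Then for all δ with ‖δ‖_p ≤ ε, ‖h_L(x+δ) − h_L'(x+δ)‖_∞ ≤ Σ_{l=1}^{L} ( ∏_{j=l+1}^{L} ‖W_j'‖_{∞→∞} ) · ‖ΔW_l‖_{∞→∞} · H_{l−1}. -/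
open scoped ENNReal NNReal

/-- The induced `∞→∞` operator norm of a matrix: the maximum absolute row sum. -/
noncomputable def opNormInf {m n : ℕ} (W : Matrix (Fin m) (Fin n) ℝ) : ℝ :=
  ⨆ i, ∑ j, |W i j|

/-- The iterates of a feedforward network: `h_0(u) = u`,
`h_{l+1}(u) = σ.(W_l h_l(u) + b_l)` (componentwise `σ`). -/
noncomputable def netIter (σ : ℝ → ℝ) (dims : ℕ → ℕ)
    (W : ∀ l : ℕ, Matrix (Fin (dims (l + 1))) (Fin (dims l)) ℝ)
    (b : ∀ l : ℕ, Fin (dims (l + 1)) → ℝ)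
    (u : Fin (dims 0) → ℝ) : (l : ℕ) → Fin (dims l) → ℝ
  | 0 => u
  | l + 1 => fun i => σ (((W l).mulVec (netIter σ dims W b u l) + b l) i)

lemma opNormInf_nonneg {m n : ℕ} (W : Matrix (Fin m) (Fin n) ℝ) : 0 ≤ opNormInf W :=
  Real.iSup_nonneg fun _ => Finset.sum_nonneg fun _ _ => abs_nonneg _

lemma mulVec_entry_le {m n : ℕ} (W : Matrix (Fin m) (Fin n) ℝ) (v : Fin n → ℝ) (i : Fin m) :
    |W.mulVec v i| ≤ opNormInf W * ‖v‖ := by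
  calc |W.mulVec v i| = |∑ j, W i j * v j| := by
        simp [Matrix.mulVec, dotProduct]
    _ ≤ ∑ j, |W i j * v j| := Finset.abs_sum_le_sum_abs _ _
    _ ≤ ∑ j, |W i j| * ‖v‖ := by
        refine Finset.sum_le_sum fun j _ => ?_
        rw [abs_mul]
        exact mul_le_mul_of_nonneg_left
          ((Real.norm_eq_abs (v j)) ▸ norm_le_pi_norm v j) (abs_nonneg _)
    _ = (∑ j, |W i j|) * ‖v‖ := (Finset.sum_mul _ _ _).symm
    _ ≤ opNormInf W * ‖v‖ := by
        refine mul_le_mul_of_nonneg_right ?_ (norm_nonneg _)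
        exact le_ciSup (f := fun i => ∑ j, |W i j|)
          (Set.Finite.bddAbove (Set.finite_range _)) i

/-- Closed-form uniform pruning residual bound on the ℓ_p perturbation ball: if
`‖h_l(x+δ)‖_∞ ≤ H_l` for all `δ` with `‖δ‖_p ≤ ε` and all `l < L`, then for all such `δ`,
`‖h_L(x+δ) - h_L'(x+δ)‖_∞ ≤ Σ_l (Π_{j>l} ‖W_j'‖_{∞→∞}) ‖ΔW_l‖_{∞→∞} H_l`. -/
theorem uniform_pruning_residual_bound (σ : ℝ → ℝ) (hσ : LipschitzWith 1 σ) (dims : ℕ → ℕ)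
    (W W' : ∀ l : ℕ, Matrix (Fin (dims (l + 1))) (Fin (dims l)) ℝ)
    (b : ∀ l : ℕ, Fin (dims (l + 1)) → ℝ)
    (p : ℝ≥0∞) [Fact (1 ≤ p)]
    (x : PiLp p (fun _ : Fin (dims 0) => ℝ)) (ε : ℝ) (hε : 0 < ε) (L : ℕ)
    (H : ℕ → ℝ) (hH0 : ∀ l, 0 ≤ H l)
    (hH : ∀ l < L, ∀ δ : PiLp p (fun _ : Fin (dims 0) => ℝ), ‖δ‖ ≤ ε →
      ‖netIter σ dims W b (WithLp.equiv p _ (x + δ)) l‖ ≤ H l) :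
    ∀ δ : PiLp p (fun _ : Fin (dims 0) => ℝ), ‖δ‖ ≤ ε →
      ‖netIter σ dims W b (WithLp.equiv p _ (x + δ)) L -
          netIter σ dims W' b (WithLp.equiv p _ (x + δ)) L‖ ≤
        ∑ l ∈ Finset.range L,
          (∏ j ∈ Finset.Ico (l + 1) L, opNormInf (W' j)) * opNormInf (W l - W' l) * H l := by
  
  intro δ hδ
  revert hH
  induction L with
  | zero => intro _; simp [netIter]
  | succ L ih =>
    intro hH
    set u := WithLp.equiv p (Fin (dims 0) → ℝ) (x + δ) with hu
    have ihL := ih fun l hl δ' hδ' => hH l (Nat.lt_succ_of_lt hl) δ' hδ'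
    have hHL : ‖netIter σ dims W b u L‖ ≤ H L := hH L (Nat.lt_succ_self L) δ hδ
    have key : ∀ i, |netIter σ dims W b u (L + 1) i - netIter σ dims W' b u (L + 1) i| ≤
        opNormInf (W L - W' L) * H L +
          opNormInf (W' L) * ‖netIter σ dims W b u L - netIter σ dims W' b u L‖ := by
      intro i
      have h1 : |netIter σ dims W b u (L + 1) i - netIter σ dims W' b u (L + 1) i|
          ≤ |((W L).mulVec (netIter σ dims W b u L) + b L) i
              - ((W' L).mulVec (netIter σ dims W' b u L) + b L) i| := by
        have := hσ.dist_le_mul (((W L).mulVec (netIter σ dims W b u L) + b L) i)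
          (((W' L).mulVec (netIter σ dims W' b u L) + b L) i)
        simpa [Real.dist_eq, netIter] using this
      refine h1.trans ?_
      have h2 : ((W L).mulVec (netIter σ dims W b u L) + b L) i
            - ((W' L).mulVec (netIter σ dims W' b u L) + b L) i
          = ((W L - W' L).mulVec (netIter σ dims W b u L)) i
            + ((W' L).mulVec (netIter σ dims W b u L - netIter σ dims W' b u L)) i := by
        simp only [Matrix.sub_mulVec, Matrix.mulVec_sub, Pi.add_apply, Pi.sub_apply]
        ring
      rw [h2]
      calc |((W L - W' L).mulVec (netIter σ dims W b u L)) i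
            + ((W' L).mulVec (netIter σ dims W b u L - netIter σ dims W' b u L)) i|
          ≤ |((W L - W' L).mulVec (netIter σ dims W b u L)) i|
            + |((W' L).mulVec (netIter σ dims W b u L - netIter σ dims W' b u L)) i| :=
            abs_add_le _ _
        _ ≤ opNormInf (W L - W' L) * ‖netIter σ dims W b u L‖
            + opNormInf (W' L) * ‖netIter σ dims W b u L - netIter σ dims W' b u L‖ :=
            add_le_add (mulVec_entry_le _ _ _) (mulVec_entry_le _ _ _)
        _ ≤ opNormInf (W L - W' L) * H L
            + opNormInf (W' L) * ‖netIter σ dims W b u L - netIter σ dims W' b u L‖ := by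
            have := mul_le_mul_of_nonneg_left hHL (opNormInf_nonneg (W L - W' L))
            linarith
    have hn : ‖netIter σ dims W b u (L + 1) - netIter σ dims W' b u (L + 1)‖ ≤
        opNormInf (W L - W' L) * H L +
          opNormInf (W' L) * ‖netIter σ dims W b u L - netIter σ dims W' b u L‖ := by
      refine (pi_norm_le_iff_of_nonneg ?_).2 fun i => ?_
      · exact add_nonneg (mul_nonneg (opNormInf_nonneg _) (hH0 L))
          (mul_nonneg (opNormInf_nonneg _) (norm_nonneg _))
      · simpa [Real.norm_eq_abs] using key i
    have hsum : ∑ l ∈ Finset.range (L + 1),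
          (∏ j ∈ Finset.Ico (l + 1) (L + 1), opNormInf (W' j)) * opNormInf (W l - W' l) * H l
        = opNormInf (W' L) * ∑ l ∈ Finset.range L,
            (∏ j ∈ Finset.Ico (l + 1) L, opNormInf (W' j)) * opNormInf (W l - W' l) * H l
          + opNormInf (W L - W' L) * H L := by
      rw [Finset.sum_range_succ, Finset.Ico_self, Finset.prod_empty, one_mul, Finset.mul_sum]
      congr 1
      refine Finset.sum_congr rfl fun l hl => ?_
      rw [Finset.prod_Ico_succ_top (Nat.succ_le_of_lt (Finset.mem_range.mp hl))]
      ring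
    rw [hsum]
    have := mul_le_mul_of_nonneg_left ihL (opNormInf_nonneg (W' L))
    linarith
end

section
/- (Single-layer convergence of Model 2 bounds to true extrema.) Let σ : ℝ → ℝ be nondecreasing and L_σ-Lipschitz, W ∈ ℝ^{m×n}, b ∈ ℝ^m, x_0 ∈ ℝ^n, ε > 0. For a neuron j, let z^lo_j := ((W)_+ (x_0 − ε·1) + (W)_− (x_0 + ε·1) + b)_j and z^hi_j := ((W)_+ (x_0 + ε·1) + (W)_− (x_0 − ε·1) + b)_j. Let M_0 < ⋯ < M_n be segment boundaries with mesh Δ such that [z^lo_j, z^hi_j] ⊆ [M_0, M_n], let i^hi be a segment index with z^hi_j ∈ [M_{i^hi−1}, M_{i^hi}], and set ū_j := sup of σ on [M_{i^hi−1}, M_{i^hi}]. Then sup over ‖x − x_0‖_∞ ≤ ε of σ((Wx+b)_j) ≤ ū_j ≤ that supremum + L_σ Δ; analogously, the segment-infimum at the segment containing z^lo_j is within L_σ Δ below the true infimum of σ((Wx+b)_j) over the ball. -/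
/-!
The pre-activation `(W x + b)_j = ∑ₖ W_{jk} x_k + b_j` is maximised over the ℓ∞-ball by pushing
each `x_k` to `x0_k ± ε` according to the sign of `W_{jk}`; this corner is attained, so the true
supremum of `σ((W x + b)_j)` over the ball is `σ(z^hi_j)` by monotonicity of `σ`. On the segment
`[M_{i-1}, M_i] ∋ z^hi_j` the supremum of `σ` is `σ(M_i)`, which exceeds `σ(z^hi_j)` by at most
`L_σ (M_i - z^hi_j) ≤ L_σ Δ`. The infimum side is symmetric.
-/

open scoped NNReal

/-- Entrywise positive part of a matrix: `(W_+)_{jk} = max(W_{jk}, 0)`. -/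
def matPos {m n : ℕ} (W : Matrix (Fin m) (Fin n) ℝ) : Matrix (Fin m) (Fin n) ℝ :=
  Matrix.of fun i j => max (W i j) 0

/-- Entrywise negative part of a matrix: `(W_−)_{jk} = min(W_{jk}, 0)`. -/
def matNeg {m n : ℕ} (W : Matrix (Fin m) (Fin n) ℝ) : Matrix (Fin m) (Fin n) ℝ :=
  Matrix.of fun i j => min (W i j) 0

open Set Matrix

lemma mul_le_of_abs_sub_le (a : ℝ) {t c ε : ℝ} (h : |t - c| ≤ ε) :
    a * t ≤ max a 0 * (c + ε) + min a 0 * (c - ε) := by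
  obtain ⟨h₁, h₂⟩ := abs_le.mp h
  rcases le_total 0 a with ha | ha
  · rw [max_eq_left ha, min_eq_right ha]; nlinarith
  · rw [max_eq_right ha, min_eq_left ha]; nlinarith

lemma le_mul_of_abs_sub_le (a : ℝ) {t c ε : ℝ} (h : |t - c| ≤ ε) :
    max a 0 * (c - ε) + min a 0 * (c + ε) ≤ a * t := by
  obtain ⟨h₁, h₂⟩ := abs_le.mp h
  rcases le_total 0 a with ha | ha
  · rw [max_eq_left ha, min_eq_right ha]; nlinarith
  · rw [max_eq_right ha, min_eq_left ha]; nlinarith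

section Box

variable {ι : Type*} [Fintype ι] {ε : ℝ}

theorem isGreatest_image_dotProduct (w x0 : ι → ℝ) (hε : 0 ≤ ε) :
    IsGreatest ((w ⬝ᵥ ·) '' {x | ‖x - x0‖ ≤ ε})
      ((fun k => max (w k) 0) ⬝ᵥ (fun k => x0 k + ε)
        + (fun k => min (w k) 0) ⬝ᵥ (fun k => x0 k - ε)) := by
  refine ⟨⟨fun k => if 0 ≤ w k then x0 k + ε else x0 k - ε, ?_, ?_⟩, ?_⟩
  · refine (pi_norm_le_iff_of_nonneg hε).mpr fun k => ?_
    rw [Pi.sub_apply]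
    split_ifs <;> simp [abs_of_nonneg hε]
  · simp only [dotProduct, ← Finset.sum_add_distrib]
    refine Finset.sum_congr rfl fun k _ => ?_
    split_ifs with h
    · rw [max_eq_left h, min_eq_right h]; ring
    · rw [max_eq_right (not_le.mp h).le, min_eq_left (not_le.mp h).le]; ring
  · rintro _ ⟨x, hx, rfl⟩
    simp only [dotProduct, ← Finset.sum_add_distrib]
    exact Finset.sum_le_sum fun k _ =>
      mul_le_of_abs_sub_le _ ((pi_norm_le_iff_of_nonneg hε).mp hx k)

theorem isLeast_image_dotProduct (w x0 : ι → ℝ) (hε : 0 ≤ ε) :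
    IsLeast ((w ⬝ᵥ ·) '' {x | ‖x - x0‖ ≤ ε})
      ((fun k => max (w k) 0) ⬝ᵥ (fun k => x0 k - ε)
        + (fun k => min (w k) 0) ⬝ᵥ (fun k => x0 k + ε)) := by
  refine ⟨⟨fun k => if 0 ≤ w k then x0 k - ε else x0 k + ε, ?_, ?_⟩, ?_⟩
  · refine (pi_norm_le_iff_of_nonneg hε).mpr fun k => ?_
    rw [Pi.sub_apply]
    split_ifs <;> simp [abs_of_nonneg hε]
  · simp only [dotProduct, ← Finset.sum_add_distrib]
    refine Finset.sum_congr rfl fun k _ => ?_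
    split_ifs with h
    · rw [max_eq_left h, min_eq_right h]; ring
    · rw [max_eq_right (not_le.mp h).le, min_eq_left (not_le.mp h).le]; ring
  · rintro _ ⟨x, hx, rfl⟩
    simp only [dotProduct, ← Finset.sum_add_distrib]
    exact Finset.sum_le_sum fun k _ =>
      le_mul_of_abs_sub_le _ ((pi_norm_le_iff_of_nonneg hε).mp hx k)

end Box

section Affine

variable {m n : ℕ} (W : Matrix (Fin m) (Fin n) ℝ) (b : Fin m → ℝ) (x0 : Fin n → ℝ) {ε : ℝ}

lemma image_mulVec_add_apply (j : Fin m) (s : Set (Fin n → ℝ)) :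
    (fun x => (W *ᵥ x + b) j) '' s = (· + b j) '' ((W j ⬝ᵥ ·) '' s) := by
  rw [image_image]; rfl

theorem isGreatest_image_mulVec_add_apply (hε : 0 ≤ ε) (j : Fin m) :
    IsGreatest ((fun x => (W *ᵥ x + b) j) '' {x | ‖x - x0‖ ≤ ε})
      ((matPos W *ᵥ (fun k => x0 k + ε) + matNeg W *ᵥ (fun k => x0 k - ε) + b) j) := by
  rw [image_mulVec_add_apply]
  exact (monotone_id.add_const (b j)).map_isGreatest (isGreatest_image_dotProduct (W j) x0 hε)

theorem isLeast_image_mulVec_add_apply (hε : 0 ≤ ε) (j : Fin m) :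
    IsLeast ((fun x => (W *ᵥ x + b) j) '' {x | ‖x - x0‖ ≤ ε})
      ((matPos W *ᵥ (fun k => x0 k - ε) + matNeg W *ᵥ (fun k => x0 k + ε) + b) j) := by
  rw [image_mulVec_add_apply]
  exact (monotone_id.add_const (b j)).map_isLeast (isLeast_image_dotProduct (W j) x0 hε)

end Affine

section Segment

variable {σ : ℝ → ℝ} {L : ℝ≥0} {p q z : ℝ}

lemma LipschitzWith.apply_le_add_mul_abs_sub (hσ : LipschitzWith L σ) (x y : ℝ) :
    σ y ≤ σ x + L * |y - x| := by
  have := hσ.dist_le_mul y x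
  rw [Real.dist_eq, Real.dist_eq] at this
  linarith [le_abs_self (σ y - σ x)]

theorem Monotone.csSup_image_Icc_mem_Icc (hmono : Monotone σ) (hσ : LipschitzWith L σ)
    (hz : z ∈ Icc p q) : sSup (σ '' Icc p q) ∈ Icc (σ z) (σ z + L * (q - p)) := by
  rw [(hmono.map_isGreatest (isGreatest_Icc (hz.1.trans hz.2))).csSup_eq]
  refine ⟨hmono hz.2, (hσ.apply_le_add_mul_abs_sub z q).trans ?_⟩
  rw [abs_of_nonneg (sub_nonneg.mpr hz.2)]
  gcongr
  exact hz.1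

theorem Monotone.csInf_image_Icc_mem_Icc (hmono : Monotone σ) (hσ : LipschitzWith L σ)
    (hz : z ∈ Icc p q) : sInf (σ '' Icc p q) ∈ Icc (σ z - L * (q - p)) (σ z) := by
  rw [(hmono.map_isLeast (isLeast_Icc (hz.1.trans hz.2))).csInf_eq]
  refine ⟨?_, hmono hz.1⟩
  have := hσ.apply_le_add_mul_abs_sub p z
  rw [abs_of_nonneg (sub_nonneg.mpr hz.1)] at this
  have : (L : ℝ) * (z - p) ≤ L * (q - p) := by gcongr; exact hz.2
  linarith

end Segment

theorem single_layer_model2_convergence_general {m n : ℕ}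
    (σ : ℝ → ℝ) (hmono : Monotone σ) (Lσ : ℝ≥0) (hσ : LipschitzWith Lσ σ)
    (W : Matrix (Fin m) (Fin n) ℝ) (b : Fin m → ℝ) (x0 : Fin n → ℝ) (ε : ℝ) (hε : 0 < ε)
    (j : Fin m)
    (zlo zhi : ℝ)
    (hzlo : zlo = ((matPos W).mulVec (fun k => x0 k - ε)
      + (matNeg W).mulVec (fun k => x0 k + ε) + b) j)
    (hzhi : zhi = ((matPos W).mulVec (fun k => x0 k + ε)
      + (matNeg W).mulVec (fun k => x0 k - ε) + b) j)
    (nseg : ℕ) (hn : 0 < nseg) (M : Fin (nseg + 1) → ℝ)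
    (Δ : ℝ)
    (hΔ : Δ = Finset.univ.sup' ⟨⟨0, hn⟩, Finset.mem_univ _⟩
      fun i : Fin nseg => M i.succ - M i.castSucc)
    (ihi : Fin nseg) (hihi : zhi ∈ Set.Icc (M ihi.castSucc) (M ihi.succ))
    (ubar : ℝ) (hubar : ubar = sSup (σ '' Set.Icc (M ihi.castSucc) (M ihi.succ)))
    (ilo : Fin nseg) (hilo : zlo ∈ Set.Icc (M ilo.castSucc) (M ilo.succ))
    (lbar : ℝ) (hlbar : lbar = sInf (σ '' Set.Icc (M ilo.castSucc) (M ilo.succ))) :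
    (sSup ((fun x => σ ((W.mulVec x + b) j)) '' {x : Fin n → ℝ | ‖x - x0‖ ≤ ε}) ≤ ubar ∧
        ubar ≤ sSup ((fun x => σ ((W.mulVec x + b) j)) '' {x : Fin n → ℝ | ‖x - x0‖ ≤ ε})
          + (Lσ : ℝ) * Δ) ∧
      (lbar ≤ sInf ((fun x => σ ((W.mulVec x + b) j)) '' {x : Fin n → ℝ | ‖x - x0‖ ≤ ε}) ∧
        sInf ((fun x => σ ((W.mulVec x + b) j)) '' {x : Fin n → ℝ | ‖x - x0‖ ≤ ε})
          ≤ lbar + (Lσ : ℝ) * Δ) := by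
  have hσ_mul_le : ∀ i : Fin nseg, (Lσ : ℝ) * (M i.succ - M i.castSucc) ≤ Lσ * Δ := fun i => by
    gcongr
    exact hΔ ▸ Finset.le_sup' (fun i : Fin nseg => M i.succ - M i.castSucc) (Finset.mem_univ i)
  rw [← image_image σ, (hmono.map_isGreatest (hzhi ▸ isGreatest_image_mulVec_add_apply W b x0
      hε.le j)).csSup_eq, (hmono.map_isLeast (hzlo ▸ isLeast_image_mulVec_add_apply W b x0
      hε.le j)).csInf_eq]
  have hu := hubar ▸ hmono.csSup_image_Icc_mem_Icc hσ hihi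
  have hl := hlbar ▸ hmono.csInf_image_Icc_mem_Icc hσ hilo
  exact ⟨⟨hu.1, hu.2.trans (by linarith [hσ_mul_le ihi])⟩, hl.2, by linarith [hl.1, hσ_mul_le ilo]⟩

/-- Single-layer convergence of Model 2 bounds to the true extrema: for a nondecreasing
`L_σ`-Lipschitz activation `σ`, neuron `j`, sign-split pre-activation bounds
`z^lo_j, z^hi_j` over the ℓ∞-ball of radius `ε` around `x_0`, and a segmentation of mesh
`Δ` covering `[z^lo_j, z^hi_j]`, the segment supremum `ū_j` at the segment containing
`z^hi_j` overestimates the true supremum of `σ((Wx+b)_j)` over the ball by at most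
`L_σ Δ`, and the segment infimum at the segment containing `z^lo_j` underestimates the
true infimum by at most `L_σ Δ`. -/
theorem single_layer_model2_convergence {m n : ℕ}
    (σ : ℝ → ℝ) (hmono : Monotone σ) (Lσ : ℝ≥0) (hσ : LipschitzWith Lσ σ)
    (W : Matrix (Fin m) (Fin n) ℝ) (b : Fin m → ℝ) (x0 : Fin n → ℝ) (ε : ℝ) (hε : 0 < ε)
    (j : Fin m)
    (zlo zhi : ℝ)
    (hzlo : zlo = ((matPos W).mulVec (fun k => x0 k - ε)
      + (matNeg W).mulVec (fun k => x0 k + ε) + b) j)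
    (hzhi : zhi = ((matPos W).mulVec (fun k => x0 k + ε)
      + (matNeg W).mulVec (fun k => x0 k - ε) + b) j)
    (nseg : ℕ) (hn : 0 < nseg) (M : Fin (nseg + 1) → ℝ) (hM : StrictMono M)
    (Δ : ℝ)
    (hΔ : Δ = Finset.univ.sup' ⟨⟨0, hn⟩, Finset.mem_univ _⟩
      fun i : Fin nseg => M i.succ - M i.castSucc)
    (hcover : Set.Icc zlo zhi ⊆ Set.Icc (M 0) (M (Fin.last nseg)))
    (ihi : Fin nseg) (hihi : zhi ∈ Set.Icc (M ihi.castSucc) (M ihi.succ))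
    (ubar : ℝ) (hubar : ubar = sSup (σ '' Set.Icc (M ihi.castSucc) (M ihi.succ)))
    (ilo : Fin nseg) (hilo : zlo ∈ Set.Icc (M ilo.castSucc) (M ilo.succ))
    (lbar : ℝ) (hlbar : lbar = sInf (σ '' Set.Icc (M ilo.castSucc) (M ilo.succ))) :
    (sSup ((fun x => σ ((W.mulVec x + b) j)) '' {x : Fin n → ℝ | ‖x - x0‖ ≤ ε}) ≤ ubar ∧
        ubar ≤ sSup ((fun x => σ ((W.mulVec x + b) j)) '' {x : Fin n → ℝ | ‖x - x0‖ ≤ ε})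
          + (Lσ : ℝ) * Δ) ∧
      (lbar ≤ sInf ((fun x => σ ((W.mulVec x + b) j)) '' {x : Fin n → ℝ | ‖x - x0‖ ≤ ε}) ∧
        sInf ((fun x => σ ((W.mulVec x + b) j)) '' {x : Fin n → ℝ | ‖x - x0‖ ≤ ε})
          ≤ lbar + (Lσ : ℝ) * Δ) :=
  single_layer_model2_convergence_general σ hmono Lσ hσ W b x0 ε hε j zlo zhi hzlo hzhi nseg hn M Δ
    hΔ ihi hihi ubar hubar ilo hilo lbar hlbar
end

section
/- (Soundness and completeness of the piecewise-linear activation encoding, Model 1.) Let M_0 < M_1 < ⋯ < M_n and let σ : [M_0, M_n] → ℝ be a piecewise-linear function satisfying σ(z) = α_i z + γ_i for all z ∈ [M_{i−1}, M_i] and each i = 1,…,n (so the pieces agree at breakpoints). Then for every z ∈ [M_0, M_n] and a ∈ ℝ: a = σ(z) if and only if there exist β ∈ {0,1}^n and u ∈ ℝ^n such that Σ_{i=1}^n β_i = 1, Σ_{i=1}^n M_{i−1} β_i ≤ z ≤ Σ_{i=1}^n M_i β_i, u_i = β_i z for all i, and a = Σ_{i=1}^n (α_i u_i + γ_i β_i).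 -/
/-! Binary selectors with `∑ β_i = 1` are exactly the unit vectors `e_j`, under which the
constraints collapse to `M_{j-1} ≤ z ≤ M_j` and `a = α_j z + γ_j`: the encoding says that `z`
lies in some segment and `a` is the value of that segment's affine piece at `z`. The segments
cover `[M_0, M_n]` and `σ` agrees with every piece on its segment, so this is `a = σ z`. -/

open Finset

theorem Fin.exists_castSucc_le_le_succ {α : Type*} [LinearOrder α] {n : ℕ} (hn : 0 < n)
    (M : Fin (n + 1) → α) {z : α} (h0 : M 0 ≤ z) (hlast : z ≤ M (Fin.last n)) :
    ∃ i : Fin n, M i.castSucc ≤ z ∧ z ≤ M i.succ := by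
  obtain ⟨m, rfl⟩ := Nat.exists_eq_add_one_of_ne_zero hn.ne'
  by_contra! hstep
  have hle : ∀ k : Fin (m + 2), M k ≤ z :=
    Fin.induction h0 fun i hi => (hstep i hi).le
  exact (hstep (Fin.last m) (hle _)).not_ge hlast

theorem binary_sum_eq_one_iff {ι R : Type*} [Fintype ι] [DecidableEq ι]
    [AddCommMonoidWithOne R] [CharZero R] (β : ι → R) :
    ((∀ i, β i = 0 ∨ β i = 1) ∧ ∑ i, β i = 1) ↔ ∃ j, β = Pi.single j 1 := by
  classical
  constructor
  · rintro ⟨hbin, hsum⟩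
    have hβ : β = fun i => if β i = 1 then 1 else 0 := by
      funext i; rcases hbin i with h | h <;> simp [h]
    rw [hβ, sum_boole, Nat.cast_eq_one, card_eq_one] at hsum
    obtain ⟨j, hj⟩ := hsum
    refine ⟨j, funext fun i => ?_⟩
    have hi : β i = 1 ↔ i = j := by simpa using congrArg (i ∈ ·) hj
    rw [Pi.single_apply]
    split_ifs with hij
    · exact hi.2 hij
    · exact (hbin i).resolve_right (mt hi.1 hij)
  · rintro ⟨j, rfl⟩
    refine ⟨fun i => ?_, by simp⟩
    by_cases h : i = j <;> simp [h]

theorem pwl_encoding_iff_exists_segment {R : Type*} [CommSemiring R] [Preorder R] [CharZero R]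
    {n : ℕ} (M : Fin (n + 1) → R) (α γ : Fin n → R) (z a : R) :
    (∃ β u : Fin n → R,
        (∀ i, β i = 0 ∨ β i = 1) ∧
        (∑ i, β i = 1) ∧
        (∑ i, M i.castSucc * β i ≤ z) ∧
        (z ≤ ∑ i, M i.succ * β i) ∧
        (∀ i, u i = β i * z) ∧
        a = ∑ i, (α i * u i + γ i * β i)) ↔
      ∃ j, z ∈ Set.Icc (M j.castSucc) (M j.succ) ∧ a = α j * z + γ j := by
  constructor
  · rintro ⟨β, u, hbin, hsum, hlo, hhi, hu, rfl⟩
    obtain ⟨j, rfl⟩ := (binary_sum_eq_one_iff β).1 ⟨hbin, hsum⟩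
    refine ⟨j, ⟨by simpa [Pi.single_apply] using hlo, by simpa [Pi.single_apply] using hhi⟩,
      ?_⟩
    simp [hu, Pi.single_apply, sum_add_distrib]
  · rintro ⟨j, ⟨hlo, hhi⟩, rfl⟩
    set β : Fin n → R := Pi.single j 1 with hβ
    obtain ⟨hbin, hsum⟩ := (binary_sum_eq_one_iff β).2 ⟨j, rfl⟩
    refine ⟨β, fun i => β i * z, hbin, hsum,
      by simpa [hβ, Pi.single_apply] using hlo, by simpa [hβ, Pi.single_apply] using hhi,
      fun _ => rfl, ?_⟩
    simp [hβ, Pi.single_apply, sum_add_distrib]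

theorem pwl_encoding_sound_complete_general (nseg : ℕ) (hn : 0 < nseg)
    (M : Fin (nseg + 1) → ℝ)
    (α γ : Fin nseg → ℝ) (σ : ℝ → ℝ)
    (hσ : ∀ i : Fin nseg, ∀ z ∈ Set.Icc (M i.castSucc) (M i.succ), σ z = α i * z + γ i)
    (z : ℝ) (hz : z ∈ Set.Icc (M 0) (M (Fin.last nseg))) (a : ℝ) :
    a = σ z ↔
      ∃ β u : Fin nseg → ℝ,
        (∀ i, β i = 0 ∨ β i = 1) ∧
        (∑ i, β i = 1) ∧
        (∑ i, M i.castSucc * β i ≤ z) ∧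
        (z ≤ ∑ i, M i.succ * β i) ∧
        (∀ i, u i = β i * z) ∧
        a = ∑ i, (α i * u i + γ i * β i) := by
  rw [pwl_encoding_iff_exists_segment]
  constructor
  · rintro rfl
    obtain ⟨j, hj⟩ := Fin.exists_castSucc_le_le_succ hn M hz.1 hz.2
    exact ⟨j, hj, hσ j z hj⟩
  · rintro ⟨j, hj, rfl⟩
    exact (hσ j z hj).symm

/-- Soundness and completeness of the piecewise-linear activation encoding (Model 1):
for a piecewise-linear `σ` on `[M_0, M_n]` with `σ(z) = α_i z + γ_i` on each segment
`[M_{i−1}, M_i]`, and `z ∈ [M_0, M_n]`, one has `a = σ(z)` iff there exist binary segment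
selectors `β ∈ {0,1}^n` with `Σ_i β_i = 1`, `Σ_i M_{i−1} β_i ≤ z ≤ Σ_i M_i β_i`, and
auxiliary variables `u_i = β_i z`, such that `a = Σ_i (α_i u_i + γ_i β_i)`. -/
theorem pwl_encoding_sound_complete (nseg : ℕ) (hn : 0 < nseg)
    (M : Fin (nseg + 1) → ℝ) (hM : StrictMono M)
    (α γ : Fin nseg → ℝ) (σ : ℝ → ℝ)
    (hσ : ∀ i : Fin nseg, ∀ z ∈ Set.Icc (M i.castSucc) (M i.succ), σ z = α i * z + γ i)
    (z : ℝ) (hz : z ∈ Set.Icc (M 0) (M (Fin.last nseg))) (a : ℝ) :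
    a = σ z ↔
      ∃ β u : Fin nseg → ℝ,
        (∀ i, β i = 0 ∨ β i = 1) ∧
        (∑ i, β i = 1) ∧
        (∑ i, M i.castSucc * β i ≤ z) ∧
        (z ≤ ∑ i, M i.succ * β i) ∧
        (∀ i, u i = β i * z) ∧
        a = ∑ i, (α i * u i + γ i * β i) :=
  pwl_encoding_sound_complete_general nseg hn M α γ σ hσ z hz a
end
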